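/- arXiv:math/0410365 — 3 statements merged into one kernel-verified Lean document; each statement's English description precedes it below -/
import Mathlib

section
/- Let H be a bialgebra over a commutative ring and let d₁, d₂ be curves in H. Then the sequence d defined by d(n) = ∑_{i+j=n} d₁(i)·d₂(j) is a curve in H. -/
open scoped TensorProduct

noncomputable section

/-- `NSymm`, the free ring on `Z₁, Z₂, …`; generator `i : ℕ` represents `Z_{i+1}`. -/
abbrev NSymm : Type := MonoidAlgebra ℤ (FreeMonoid ℕ)

def Zgen : ℕ → NSymm
  | 0 => 1
  | n + 1 => MonoidAlgebra.of ℤ (FreeMonoid ℕ) (FreeMonoid.of n)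

def Zword (l : List ℕ) : NSymm := (l.map Zgen).prod

def Delta : NSymm →ₐ[ℤ] NSymm ⊗[ℤ] NSymm :=
  MonoidAlgebra.lift ℤ (NSymm ⊗[ℤ] NSymm) (FreeMonoid ℕ)
    (FreeMonoid.lift fun i =>
      ∑ a ∈ Finset.range (i + 2), Zgen a ⊗ₜ[ℤ] Zgen (i + 1 - a))

def IsPrimitive (P : NSymm) : Prop :=
  Delta P = 1 ⊗ₜ[ℤ] P + P ⊗ₜ[ℤ] 1

def Ver (r : ℕ) : NSymm →ₐ[ℤ] NSymm :=
  MonoidAlgebra.lift ℤ NSymm (FreeMonoid ℕ)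
    (FreeMonoid.lift fun i => if r ∣ (i + 1) then Zgen ((i + 1) / r) else 0)

def NewtonP (n : ℕ) : NSymm :=
  ∑ c : Composition n,
    ((-1 : ℤ) ^ (c.length + 1) * (c.blocks.getLastD 0 : ℤ)) • Zword c.blocks

def IsComposition (l : List ℕ) : Prop := l ≠ [] ∧ ∀ a ∈ l, 0 < a

def lexLt (l l' : List ℕ) : Prop := List.Lex (· < ·) l l'

def IsLyndon (l : List ℕ) : Prop :=
  IsComposition l ∧ ∀ i, 0 < i → i < l.length → lexLt l (l.drop i)

def gcdL (l : List ℕ) : ℕ := l.foldr Nat.gcd 0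

def wtC (l : List ℕ) : ℕ := l.sum

def wllLt (l l' : List ℕ) : Prop :=
  wtC l < wtC l' ∨ (wtC l = wtC l' ∧
    (l.length < l'.length ∨ (l.length = l'.length ∧ lexLt l l')))

def coeffw (P : NSymm) (w : FreeMonoid ℕ) : ℤ := P.coeff w

def coeffC (P : NSymm) (l : List ℕ) : ℤ := coeffw P (FreeMonoid.ofList (l.map (· - 1)))

def wtWord (w : FreeMonoid ℕ) : ℕ := (FreeMonoid.toList w).sum + (FreeMonoid.toList w).length

def IsHomog (P : NSymm) (n : ℕ) : Prop := ∀ w, coeffw P w ≠ 0 → wtWord w = n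

abbrev TwoNSymm : Type := MonoidAlgebra ℤ (FreeMonoid (ℕ ⊕ ℕ))

def Xgen : ℕ → TwoNSymm
  | 0 => 1
  | n + 1 => MonoidAlgebra.of ℤ (FreeMonoid (ℕ ⊕ ℕ)) (FreeMonoid.of (Sum.inl n))

def Ygen : ℕ → TwoNSymm
  | 0 => 1
  | n + 1 => MonoidAlgebra.of ℤ (FreeMonoid (ℕ ⊕ ℕ)) (FreeMonoid.of (Sum.inr n))

def Delta2 : TwoNSymm →ₐ[ℤ] TwoNSymm ⊗[ℤ] TwoNSymm :=
  MonoidAlgebra.lift ℤ (TwoNSymm ⊗[ℤ] TwoNSymm) (FreeMonoid (ℕ ⊕ ℕ))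
    (FreeMonoid.lift fun s =>
      Sum.elim
        (fun i => ∑ a ∈ Finset.range (i + 2), Xgen a ⊗ₜ[ℤ] Xgen (i + 1 - a))
        (fun i => ∑ a ∈ Finset.range (i + 2), Ygen a ⊗ₜ[ℤ] Ygen (i + 1 - a)) s)

def Ver2 (r : ℕ) : TwoNSymm →ₐ[ℤ] TwoNSymm :=
  MonoidAlgebra.lift ℤ TwoNSymm (FreeMonoid (ℕ ⊕ ℕ))
    (FreeMonoid.lift fun s =>
      Sum.elim
        (fun i => if r ∣ (i + 1) then Xgen ((i + 1) / r) else 0)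
        (fun i => if r ∣ (i + 1) then Ygen ((i + 1) / r) else 0) s)

def coeffw2 (P : TwoNSymm) (w : FreeMonoid (ℕ ⊕ ℕ)) : ℤ := P.coeff w

def xwt (w : FreeMonoid (ℕ ⊕ ℕ)) : ℕ :=
  ((FreeMonoid.toList w).map (Sum.elim (· + 1) (fun _ => 0))).sum

def ywt (w : FreeMonoid (ℕ ⊕ ℕ)) : ℕ :=
  ((FreeMonoid.toList w).map (Sum.elim (fun _ => 0) (· + 1))).sum

def wlLt (p q : ℕ × ℕ) : Prop :=
  p.1 + p.2 < q.1 + q.2 ∨ (p.1 + p.2 = q.1 + q.2 ∧ p.1 < q.1)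

def reduceP (p : ℕ × ℕ) : ℕ × ℕ := (p.1 / Nat.gcd p.1 p.2, p.2 / Nat.gcd p.1 p.2)

def LIdentity (L : ℕ → ℕ → TwoNSymm) : Prop :=
  ∀ u v : ℕ, 1 ≤ u → 1 ≤ v →
    Xgen u * Ygen v - Ygen v * Xgen u =
      ∑ᶠ p ∈ {p : (ℕ × ℕ) × List (ℕ × ℕ) |
          p.2 ≠ [] ∧ (∀ q ∈ p.2, 0 < q.1 ∧ 0 < q.2) ∧
          p.1.1 + (p.2.map Prod.fst).sum = u ∧
          p.1.2 + (p.2.map Prod.snd).sum = v ∧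
          (p.2.map reduceP).Pairwise wlLt},
        Ygen p.1.2 * Xgen p.1.1 * (p.2.map fun q => L q.1 q.2).prod

def NIdentity (N : ℕ → ℕ → NSymm) : Prop :=
  ∀ u v : ℕ, 1 ≤ u → 1 ≤ v →
    (((u + v).choose u : ℤ)) • Zgen (u + v) =
      ∑ᶠ p ∈ {p : (ℕ × ℕ) × List (ℕ × ℕ) |
          (∀ q ∈ p.2, 0 < q.1 ∧ 0 < q.2) ∧
          p.1.1 + (p.2.map Prod.fst).sum = u ∧
          p.1.2 + (p.2.map Prod.snd).sum = v ∧
          (p.2.map reduceP).Pairwise wlLt},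
        Zgen p.1.1 * Zgen p.1.2 * (p.2.map fun q => N q.1 q.2).prod

def substXY (d1 d2 : ℕ → NSymm) : TwoNSymm →ₐ[ℤ] NSymm :=
  MonoidAlgebra.lift ℤ NSymm (FreeMonoid (ℕ ⊕ ℕ))
    (FreeMonoid.lift fun s => Sum.elim (fun i => d1 (i + 1)) (fun i => d2 (i + 1)) s)

def substZ (e : ℕ → NSymm) : NSymm →ₐ[ℤ] NSymm :=
  MonoidAlgebra.lift ℤ NSymm (FreeMonoid ℕ) (FreeMonoid.lift fun i => e (i + 1))

def dSpec (L : ℕ → ℕ → TwoNSymm) (d : List ℕ → ℕ → NSymm) : Prop :=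
  (∀ l, IsLyndon l → d l 0 = 1) ∧
  (∀ n, 0 < n → ∀ i, d [n] i = Zgen i) ∧
  (∀ l, IsLyndon l → 1 < l.length →
    ∀ i₀, 0 < i₀ → i₀ < l.length →
      (∀ j, 0 < j → j < l.length → ¬ lexLt (l.drop j) (l.drop i₀)) →
      ∀ i, d l i =
        substXY (d (l.take i₀)) (d (l.drop i₀))
          (L (i * gcdL (l.take i₀) / gcdL l) (i * gcdL (l.drop i₀) / gcdL l)))

def Pof (d : List ℕ → ℕ → NSymm) (l : List ℕ) : NSymm := substZ (d l) (NewtonP (gcdL l))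

def IsCurveN (c : ℕ → NSymm) : Prop :=
  c 0 = 1 ∧ ∀ n, Delta (c n) = ∑ i ∈ Finset.range (n + 1), c i ⊗ₜ[ℤ] c (n - i)

def IsCurve2 (c : ℕ → TwoNSymm) : Prop :=
  c 0 = 1 ∧ ∀ n, Delta2 (c n) = ∑ i ∈ Finset.range (n + 1), c i ⊗ₜ[ℤ] c (n - i)

def IsVCurveN (c : ℕ → NSymm) : Prop :=
  IsCurveN c ∧ ∀ r n, 1 ≤ r → 1 ≤ n → Ver r (c n) = if r ∣ n then c (n / r) else 0

def IsCurveB (R : Type) [CommRing R] {H : Type} [Ring H] [Bialgebra R H] (c : ℕ → H) : Prop :=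
  c 0 = 1 ∧ ∀ n, Coalgebra.comul (R := R) (c n) = ∑ i ∈ Finset.range (n + 1), c i ⊗ₜ[R] c (n - i)

def Is2CurveB (R : Type) [CommRing R] {H : Type} [Ring H] [Bialgebra R H]
    (c : ℕ → ℕ → H) : Prop :=
  c 0 0 = 1 ∧ ∀ n m, Coalgebra.comul (R := R) (c n m) =
    ∑ i ∈ Finset.range (n + 1), ∑ j ∈ Finset.range (m + 1),
      c i j ⊗ₜ[R] c (n - i) (m - j)

def Mq (α : List ℕ) : MvPowerSeries ℕ ℤ :=
  fun m => if (m.support.sort (· ≤ ·)).map m = α then 1 else 0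

def degm (m : ℕ →₀ ℕ) : ℕ := m.sum fun _ e => e

def QSymmMod : Submodule ℤ (MvPowerSeries ℕ ℤ) :=
  Submodule.span ℤ (insert 1 {f | ∃ α : List ℕ, IsComposition α ∧ f = Mq α})

abbrev NSymmQ : Type := MonoidAlgebra ℚ (FreeMonoid ℕ)

def ZgenQ : ℕ → NSymmQ
  | 0 => 1
  | n + 1 => MonoidAlgebra.of ℚ (FreeMonoid ℕ) (FreeMonoid.of n)

def DeltaQ : NSymmQ →ₐ[ℚ] NSymmQ ⊗[ℚ] NSymmQ :=
  MonoidAlgebra.lift ℚ (NSymmQ ⊗[ℚ] NSymmQ) (FreeMonoid ℕ)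
    (FreeMonoid.lift fun i =>
      ∑ a ∈ Finset.range (i + 2), ZgenQ a ⊗ₜ[ℚ] ZgenQ (i + 1 - a))

def IsPrimitiveQ (P : NSymmQ) : Prop :=
  DeltaQ P = 1 ⊗ₜ[ℚ] P + P ⊗ₜ[ℚ] 1

def toQ : NSymm →ₐ[ℤ] NSymmQ :=
  MonoidAlgebra.lift ℤ NSymmQ (FreeMonoid ℕ) (MonoidAlgebra.of ℚ (FreeMonoid ℕ))

/-! Encode a sequence `c` as the power series `C = ∑ c n Xⁿ` over `H`. Then `c` is a curve iff
`c 0 = 1` and, coefficientwise, `Δ C = (C ⊗ 1) (1 ⊗ C)`. The sequence in the theorem is encoded by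
`C₁ C₂`, and since `Δ` is multiplicative and the series `C₁ ⊗ 1` and `1 ⊗ C₂` commute,
`Δ (C₁ C₂) = (C₁ ⊗ 1)(1 ⊗ C₁)(C₂ ⊗ 1)(1 ⊗ C₂) = (C₁ C₂ ⊗ 1)(1 ⊗ C₁ C₂)`. -/

namespace PowerSeries

variable {A B : Type*} [Semiring A] [Semiring B]

theorem map_mk (f : A →+* B) (c : ℕ → A) : map f (mk c) = mk (f ∘ c) := by
  ext n
  simp

theorem coeff_mk_mul_mk (f g : ℕ → A) (n : ℕ) :
    coeff n (mk f * mk g) = ∑ i ∈ Finset.range (n + 1), f i * g (n - i) := by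
  simp only [coeff_mul, coeff_mk]
  exact Finset.Nat.sum_antidiagonal_eq_sum_range_succ (fun i j => f i * g j) n

theorem commute_of_forall_coeff_commute {φ ψ : A⟦X⟧}
    (h : ∀ i j, Commute (coeff i φ) (coeff j ψ)) : Commute φ ψ := by
  ext n
  rw [coeff_mul, coeff_mul, ← Finset.Nat.sum_antidiagonal_swap]
  exact Finset.sum_congr rfl fun p _ => h p.2 p.1

end PowerSeries

open PowerSeries Algebra.TensorProduct

section Curves

variable {R H : Type} [CommRing R] [Ring H] [Bialgebra R H]

theorem commute_map_includeLeft_map_includeRight (φ ψ : H⟦X⟧) :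
    Commute (map (includeLeft : H →ₐ[R] H ⊗[R] H).toRingHom φ)
      (map (includeRight : H →ₐ[R] H ⊗[R] H).toRingHom ψ) :=
  commute_of_forall_coeff_commute fun i j => by
    simp only [coeff_map, AlgHom.toRingHom_eq_coe, RingHom.coe_coe, includeLeft_apply,
      includeRight_apply]
    exact (Commute.one_right _).tmul (Commute.one_left _)

theorem isCurveB_iff_map_comul (c : ℕ → H) :
    IsCurveB R c ↔ c 0 = 1 ∧ map (Bialgebra.comulAlgHom R H).toRingHom (mk c) =
      map (includeLeft : H →ₐ[R] H ⊗[R] H).toRingHom (mk c) *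
        map (includeRight : H →ₐ[R] H ⊗[R] H).toRingHom (mk c) := by
  refine and_congr_right fun _ => (PowerSeries.ext_iff.trans (forall_congr' fun n => ?_)).symm
  rw [map_mk, map_mk, map_mk, coeff_mk, coeff_mk_mul_mk]
  simp [tmul_mul_tmul]

end Curves

/-- The product of two curves is a curve. -/
theorem curve_mul (R H : Type) [CommRing R] [Ring H] [Bialgebra R H]
    (d1 d2 : ℕ → H) (h1 : IsCurveB R d1) (h2 : IsCurveB R d2) :
    IsCurveB R (fun n => ∑ i ∈ Finset.range (n + 1), d1 i * d2 (n - i)) := by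
  obtain ⟨h10, hΔ1⟩ := (isCurveB_iff_map_comul d1).1 h1
  obtain ⟨h20, hΔ2⟩ := (isCurveB_iff_map_comul d2).1 h2
  have hmk : mk (fun n => ∑ i ∈ Finset.range (n + 1), d1 i * d2 (n - i)) = mk d1 * mk d2 :=
    ext fun n => by rw [coeff_mk, coeff_mk_mul_mk]
  refine (isCurveB_iff_map_comul _).2 ⟨by simp [h10, h20], ?_⟩
  rw [hmk, map_mul, map_mul, map_mul, hΔ1, hΔ2, mul_assoc, mul_assoc,
    (commute_map_includeLeft_map_includeRight (mk d2) (mk d1)).symm.left_comm]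

end
end

section
/- For every n ≥ 1, the Newton primitive P_n(Z) is a primitive element of NSymm, is homogeneous of weight n, and satisfies the recursion P_n(Z) = n·Z_n − Z_{n−1}P_1(Z) − Z_{n−2}P_2(Z) − ··· − Z_1P_{n−1}(Z). -/
open scoped TensorProduct

noncomputable section

/-!
Put `Z(t) = ∑ Zₙ tⁿ` and `P(t) = ∑ Pₙ tⁿ`. Splitting a composition into its first block and the
rest turns the definition of `Pₙ` into the Newton recursion `n Zₙ = ∑_{i+j=n} Zᵢ Pⱼ`, that is
`t Z'(t) = Z(t) P(t)`. As `Z(t)` is grouplike and `t d/dt` is a derivation, applying `Δ` gives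
`Δ(Z(t)) (1 ⊗ P(t) + P(t) ⊗ 1) = Δ(Z(t)) Δ(P(t))`, and comparing degree `n` coefficients
inductively shows that every `Pₙ` is primitive. Homogeneity holds term by term.
-/

open Finset TensorProduct

namespace Finset.Nat

variable {M : Type*} [AddCommMonoid M]

theorem sum_antidiagonal_sum_antidiagonal_fst_assoc (f : ℕ → ℕ → ℕ → M) (n : ℕ) :
    ∑ x ∈ antidiagonal n, ∑ y ∈ antidiagonal x.1, f y.1 y.2 x.2 =
      ∑ x ∈ antidiagonal n, ∑ y ∈ antidiagonal x.2, f x.1 y.1 y.2 := by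
  simp only [sum_sigma']
  apply sum_nbij' (fun ⟨⟨_, j⟩, ⟨k, l⟩⟩ ↦ ⟨(k, l + j), (l, j)⟩)
    (fun ⟨⟨i, _⟩, ⟨k, l⟩⟩ ↦ ⟨(i + k, l), (i, k)⟩) <;> aesop (add simp [add_assoc])

theorem sum_antidiagonal_sum_antidiagonal_fst_comm (f : ℕ → ℕ → ℕ → M) (n : ℕ) :
    ∑ x ∈ antidiagonal n, ∑ y ∈ antidiagonal x.1, f y.1 y.2 x.2 =
      ∑ x ∈ antidiagonal n, ∑ y ∈ antidiagonal x.1, f y.1 x.2 y.2 := by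
  simp only [sum_sigma']
  apply sum_nbij' (fun ⟨⟨_, j⟩, ⟨k, l⟩⟩ ↦ ⟨(k + j, l), (k, j)⟩)
    (fun ⟨⟨_, j⟩, ⟨k, l⟩⟩ ↦ ⟨(k + j, l), (k, j)⟩) <;> aesop (add simp [add_right_comm])

end Finset.Nat

section NewtonRecursion

variable {R A : Type*} [CommRing R] [Ring A] [Algebra R A] (Δ : A →ₐ[R] A ⊗[R] A) {z p : ℕ → A}

theorem sum_antidiagonal_map_mul_one_tmul_add_tmul_one
    (hΔ : ∀ n, Δ (z n) = ∑ x ∈ antidiagonal n, z x.1 ⊗ₜ[R] z x.2)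
    (hrec : ∀ n, ∑ x ∈ antidiagonal n, z x.1 * p x.2 = n • z n) (n : ℕ) :
    ∑ x ∈ antidiagonal n, Δ (z x.1) * (1 ⊗ₜ[R] p x.2 + p x.2 ⊗ₜ[R] 1) = n • Δ (z n) := by
  have left : ∑ x ∈ antidiagonal n, Δ (z x.1) * (1 ⊗ₜ[R] p x.2) =
      ∑ x ∈ antidiagonal n, x.2 • z x.1 ⊗ₜ[R] z x.2 := by
    simp only [hΔ, sum_mul, Algebra.TensorProduct.tmul_mul_tmul, mul_one]
    rw [Nat.sum_antidiagonal_sum_antidiagonal_fst_assoc (fun c d b => z c ⊗ₜ[R] (z d * p b))]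
    simp only [← tmul_sum, hrec, tmul_smul]
  have right : ∑ x ∈ antidiagonal n, Δ (z x.1) * (p x.2 ⊗ₜ[R] 1) =
      ∑ x ∈ antidiagonal n, x.1 • z x.1 ⊗ₜ[R] z x.2 := by
    simp only [hΔ, sum_mul, Algebra.TensorProduct.tmul_mul_tmul, mul_one]
    rw [Nat.sum_antidiagonal_sum_antidiagonal_fst_comm (fun c d b => (z c * p b) ⊗ₜ[R] z d)]
    simp only [← sum_tmul, hrec, smul_tmul']
  simp only [mul_add, sum_add_distrib]
  rw [left, right, ← sum_add_distrib, hΔ, smul_sum]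
  refine sum_congr rfl fun x hx => ?_
  rw [← add_smul, add_comm, HasAntidiagonal.mem_antidiagonal.1 hx]

theorem map_eq_one_tmul_add_tmul_one_of_newton_recursion (hz : z 0 = 1)
    (hΔ : ∀ n, Δ (z n) = ∑ x ∈ antidiagonal n, z x.1 ⊗ₜ[R] z x.2)
    (hrec : ∀ n, ∑ x ∈ antidiagonal n, z x.1 * p x.2 = n • z n) (n : ℕ) :
    Δ (p n) = 1 ⊗ₜ[R] p n + p n ⊗ₜ[R] 1 := by
  induction n using Nat.strong_induction_on with
  | _ n ih =>
  -- both sides equal `n • Δ (z n)`; by induction they agree termwise except at `x = (0, n)`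
  have key : ∑ x ∈ antidiagonal n, Δ (z x.1) * Δ (p x.2) =
      ∑ x ∈ antidiagonal n, Δ (z x.1) * (1 ⊗ₜ[R] p x.2 + p x.2 ⊗ₜ[R] 1) := by
    rw [sum_antidiagonal_map_mul_one_tmul_add_tmul_one Δ hΔ hrec, ← map_nsmul, ← hrec, map_sum]
    simp only [map_mul]
  have hmem : (0, n) ∈ antidiagonal n := by simp
  have lower : ∑ x ∈ (antidiagonal n).erase (0, n), Δ (z x.1) * Δ (p x.2) =
      ∑ x ∈ (antidiagonal n).erase (0, n), Δ (z x.1) * (1 ⊗ₜ[R] p x.2 + p x.2 ⊗ₜ[R] 1) := by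
    refine sum_congr rfl fun x hx => ?_
    obtain ⟨hne, hx⟩ := mem_erase.1 hx
    have : x.1 ≠ 0 := fun h => hne (Prod.ext h (by simp_all))
    rw [ih x.2 (by rw [HasAntidiagonal.mem_antidiagonal] at hx; omega)]
  rwa [← add_sum_erase _ _ hmem, ← add_sum_erase _ _ hmem, lower, add_left_inj, hz, map_one,
    one_mul, one_mul] at key

end NewtonRecursion

namespace Composition

instance : Unique (Composition 0) where
  default := ones 0
  uniq c := Composition.ext <| (c.blocks_eq_nil.2 rfl).trans ((ones 0).blocks_eq_nil.2 rfl).symm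

theorem blocks_eq_cons_tail {n : ℕ} (c : Composition (n + 1)) :
    c.blocks = (n + 1 - c.blocks.tail.sum) :: c.blocks.tail := by
  obtain ⟨_ | ⟨a, t⟩, hpos, hsum⟩ := c
  · simp at hsum
  · have ha := hpos List.mem_cons_self
    simp only [List.sum_cons, List.tail_cons] at hsum ⊢
    rw [show n + 1 - t.sum = a by omega]

/-- Split off the first block: `c ↦ (sum of the remaining blocks, remaining blocks)`. -/
def succEquivSigma (n : ℕ) : Composition (n + 1) ≃ Σ i : Fin (n + 1), Composition i where
  toFun c := ⟨⟨c.blocks.tail.sum, by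
      have hhead := c.blocks_pos (c.blocks_eq_cons_tail ▸ List.mem_cons_self)
      omega⟩,
    ⟨c.blocks.tail, fun h => c.blocks_pos (List.mem_of_mem_tail h), rfl⟩⟩
  invFun p := ⟨(n + 1 - p.1) :: p.2.blocks, by
      rintro a (_ | ⟨_, h⟩)
      · exact Nat.sub_pos_of_lt p.1.2
      · exact p.2.blocks_pos h, by
      rw [List.sum_cons, p.2.blocks_sum, Nat.sub_add_cancel p.1.2.le]⟩
  left_inv c := Composition.ext c.blocks_eq_cons_tail.symm
  right_inv := by
    rintro ⟨⟨i, _⟩, ⟨blocks, _, hsum⟩⟩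
    obtain rfl : blocks.sum = i := hsum
    rfl

theorem sum_succ {M : Type*} [AddCommMonoid M] (f : List ℕ → M) (n : ℕ) :
    ∑ c : Composition (n + 1), f c.blocks =
      ∑ i ∈ Finset.range (n + 1), ∑ c : Composition i, f ((n + 1 - i) :: c.blocks) := by
  rw [← Fin.sum_univ_eq_sum_range (fun i => ∑ c : Composition i, f ((n + 1 - i) :: c.blocks)),
    ← Fintype.sum_sigma fun p : Σ i : Fin (n + 1), Composition i =>
      f ((n + 1 - p.1) :: p.2.blocks)]
  exact Fintype.sum_equiv (succEquivSigma n) _ _ fun c => congrArg f c.blocks_eq_cons_tail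

end Composition

theorem zgen_zero : Zgen 0 = 1 := rfl

theorem delta_zgen (n : ℕ) : Delta (Zgen n) = ∑ x ∈ antidiagonal n, Zgen x.1 ⊗ₜ[ℤ] Zgen x.2 := by
  cases n with
  | zero => simp [zgen_zero, Algebra.TensorProduct.one_def]
  | succ i =>
    rw [Nat.sum_antidiagonal_eq_sum_range_succ (fun a b => Zgen a ⊗ₜ[ℤ] Zgen b)]
    exact (MonoidAlgebra.lift_of _ _).trans (FreeMonoid.lift_eval_of _ _)

theorem zword_cons (a : ℕ) (l : List ℕ) : Zword (a :: l) = Zgen a * Zword l := by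
  simp [Zword]

def newtonTerm (l : List ℕ) : NSymm := ((-1 : ℤ) ^ (l.length + 1) * (l.getLastD 0 : ℤ)) • Zword l

theorem newtonP_eq_sum_newtonTerm (n : ℕ) : NewtonP n = ∑ c : Composition n, newtonTerm c.blocks :=
  rfl

theorem newtonTerm_singleton (a : ℕ) : newtonTerm [a] = (a : ℤ) • Zgen a := by
  simp [newtonTerm, Zword]

theorem newtonTerm_cons (a : ℕ) {l : List ℕ} (hl : l ≠ []) :
    newtonTerm (a :: l) = -(Zgen a * newtonTerm l) := by
  obtain ⟨b, t, rfl⟩ := List.exists_cons_of_ne_nil hl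
  simp only [newtonTerm, zword_cons, List.length_cons, List.getLastD_cons, mul_smul_comm, ← neg_smul]
  congr 1
  ring

theorem newtonP_zero : NewtonP 0 = 0 := by
  simp [newtonP_eq_sum_newtonTerm, newtonTerm, (default : Composition 0).blocks_eq_nil.2 rfl]

theorem newtonP_eq_smul_sub_sum (n : ℕ) :
    NewtonP n = (n : ℤ) • Zgen n - ∑ i ∈ Ico 1 n, Zgen (n - i) * NewtonP i := by
  cases n with
  | zero => simp [newtonP_zero]
  | succ m =>
    rw [newtonP_eq_sum_newtonTerm, Composition.sum_succ, range_eq_Ico,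
      sum_eq_sum_Ico_succ_bot m.succ_pos, Fintype.sum_unique, sub_eq_add_neg, ← sum_neg_distrib]
    congr 1
    · simp [(default : Composition 0).blocks_eq_nil.2 rfl, newtonTerm_singleton]
    · refine sum_congr rfl fun i hi => ?_
      rw [newtonP_eq_sum_newtonTerm, mul_sum, ← sum_neg_distrib]
      refine sum_congr rfl fun c _ => newtonTerm_cons _ ?_
      rw [Ne, c.blocks_eq_nil]
      exact (Nat.one_le_iff_ne_zero.1 (mem_Ico.1 hi).1)

theorem sum_antidiagonal_zgen_mul_newtonP (n : ℕ) :
    ∑ x ∈ antidiagonal n, Zgen x.1 * NewtonP x.2 = n • Zgen n := by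
  rcases Nat.eq_zero_or_pos n with rfl | hn
  · simp [newtonP_zero]
  rw [← Nat.sum_antidiagonal_swap]
  simp only [Prod.fst_swap, Prod.snd_swap]
  rw [Nat.sum_antidiagonal_eq_sum_range_succ (fun i j => Zgen j * NewtonP i), range_eq_Ico,
    sum_eq_sum_Ico_succ_bot n.succ_pos, sum_Ico_succ_top hn, newtonP_zero, mul_zero, zero_add,
    Nat.sub_self, zgen_zero, one_mul, newtonP_eq_smul_sub_sum n, add_sub_cancel, natCast_zsmul]

theorem isPrimitive_newtonP (n : ℕ) : IsPrimitive (NewtonP n) :=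
  map_eq_one_tmul_add_tmul_one_of_newton_recursion Delta zgen_zero delta_zgen
    sum_antidiagonal_zgen_mul_newtonP n

theorem IsHomog.sum {ι : Type*} {s : Finset ι} {P : ι → NSymm} {n : ℕ}
    (h : ∀ i ∈ s, IsHomog (P i) n) : IsHomog (∑ i ∈ s, P i) n := by
  intro w hw
  rw [coeffw, MonoidAlgebra.coeff_sum, Finsupp.finsetSum_apply] at hw
  obtain ⟨i, hi, hPi⟩ := exists_ne_zero_of_sum_ne_zero hw
  exact h i hi w hPi

theorem IsHomog.zsmul {P : NSymm} {n : ℕ} (k : ℤ) (h : IsHomog P n) : IsHomog (k • P) n :=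
  fun w hw => h w (right_ne_zero_of_mul hw)

theorem zword_eq_single {l : List ℕ} (hl : ∀ a ∈ l, 0 < a) :
    Zword l = MonoidAlgebra.single (FreeMonoid.ofList (l.map (· - 1))) 1 := by
  induction l with
  | nil => rfl
  | cons a t ih =>
    obtain ⟨b, rfl⟩ := Nat.exists_eq_add_one_of_ne_zero (hl a List.mem_cons_self).ne'
    rw [zword_cons, ih fun x hx => hl x (List.mem_cons_of_mem _ hx)]
    exact MonoidAlgebra.single_mul_single ..

theorem wtWord_ofList_map_pred {l : List ℕ} (hl : ∀ a ∈ l, 0 < a) :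
    wtWord (FreeMonoid.ofList (l.map (· - 1))) = l.sum := by
  induction l with
  | nil => rfl
  | cons a t ih =>
    have ha := hl a List.mem_cons_self
    have ht := ih fun x hx => hl x (List.mem_cons_of_mem _ hx)
    simp only [wtWord, FreeMonoid.toList_ofList, List.map_cons, List.sum_cons, List.length_cons,
      List.length_map] at ht ⊢
    omega

theorem isHomog_zword {l : List ℕ} (hl : ∀ a ∈ l, 0 < a) : IsHomog (Zword l) l.sum := by
  intro w hw
  rw [coeffw, zword_eq_single hl, MonoidAlgebra.coeff_single] at hw
  obtain ⟨rfl, -⟩ := Finsupp.single_apply_ne_zero.1 hw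
  exact wtWord_ofList_map_pred hl

theorem isHomog_newtonP (n : ℕ) : IsHomog (NewtonP n) n := by
  refine IsHomog.sum fun c _ => ?_
  have h := isHomog_zword fun _ => c.blocks_pos
  rw [c.blocks_sum] at h
  exact h.zsmul _

theorem newton_primitive_general (n : ℕ) :
    IsPrimitive (NewtonP n) ∧ IsHomog (NewtonP n) n ∧
    NewtonP n = (n : ℤ) • Zgen n - ∑ i ∈ Finset.Ico 1 n, Zgen (n - i) * NewtonP i :=
  ⟨isPrimitive_newtonP n, isHomog_newtonP n, newtonP_eq_smul_sub_sum n⟩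

/-- The Newton primitives are primitive, homogeneous of weight `n`,
and satisfy the Newton recursion. -/
theorem newton_primitive (n : ℕ) (hn : 1 ≤ n) :
    IsPrimitive (NewtonP n) ∧ IsHomog (NewtonP n) n ∧
    NewtonP n = (n : ℤ) • Zgen n - ∑ i ∈ Finset.Ico 1 n, Zgen (n - i) * NewtonP i :=
  newton_primitive_general n

end
end

section
/- For all r, n ≥ 1: if r divides n then V_r(P_n(Z)) = r · P_{n/r}(Z), and if r does not divide n then V_r(P_n(Z)) = 0. -/
open scoped TensorProduct

noncomputable section

/-!
`V_r` sends the word `Z_{r₁} ⋯ Z_{r_k}` to `Z_{r₁/r} ⋯ Z_{r_k/r}` when `r` divides every part and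
to `0` otherwise. A composition of `n` whose parts are all divisible by `r` exists only if `r ∣ n`,
and these compositions are then exactly the dilations by `r` of the compositions of `n / r`.
Dilation keeps the number of parts and multiplies the last part, hence the coefficient in `P_n`,
by `r`.
-/

theorem List.map_mul_div_cancel_left {r : ℕ} {l : List ℕ} (h : ∀ b ∈ l, r ∣ b) :
    l.map (fun b => r * (b / r)) = l := by
  conv_rhs => rw [← l.map_id]
  exact List.map_congr_left fun b hb => Nat.mul_div_cancel' (h b hb)

namespace Composition

variable {m : ℕ}

def scale (c : Composition m) {r : ℕ} (hr : 0 < r) : Composition (r * m) where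
  blocks := c.blocks.map (r * ·)
  blocks_pos hb := by
    obtain ⟨b, hb', rfl⟩ := List.mem_map.mp hb
    exact Nat.mul_pos hr (c.blocks_pos hb')
  blocks_sum := by rw [List.sum_map_mul_left, List.map_id', c.blocks_sum]

theorem scale_blocks (c : Composition m) {r : ℕ} (hr : 0 < r) :
    (c.scale hr).blocks = c.blocks.map (r * ·) := rfl

theorem scale_blocks_map_div (c : Composition m) {r : ℕ} (hr : 0 < r) :
    (c.scale hr).blocks.map (· / r) = c.blocks := by
  simp [scale_blocks, Function.comp_def, hr]

def scaleEquiv {r : ℕ} (hr : 0 < r) :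
    Composition m ≃ {c : Composition (r * m) // ∀ b ∈ c.blocks, r ∣ b} where
  toFun c := ⟨c.scale hr, by simp [scale_blocks]⟩
  invFun c :=
    { blocks := c.1.blocks.map (· / r)
      blocks_pos hb := by
        obtain ⟨b, hb', rfl⟩ := List.mem_map.mp hb
        exact Nat.div_pos (Nat.le_of_dvd (c.1.blocks_pos hb') (c.2 b hb')) hr
      blocks_sum := by
        apply Nat.eq_of_mul_eq_mul_left hr
        rw [← List.sum_map_mul_left, List.map_mul_div_cancel_left c.2, c.1.blocks_sum] }
  left_inv c := Composition.ext (c.scale_blocks_map_div hr)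
  right_inv c := Subtype.ext <| Composition.ext <| by
    simp [scale_blocks, List.map_map, Function.comp_def, List.map_mul_div_cancel_left c.2]

end Composition

theorem ver_zgen {m : ℕ} (hm : 0 < m) (r : ℕ) :
    Ver r (Zgen m) = if r ∣ m then Zgen (m / r) else 0 := by
  obtain ⟨i, rfl⟩ := Nat.exists_eq_add_of_lt hm
  simp [Ver, Zgen]

theorem ver_zword (r : ℕ) {l : List ℕ} (hl : ∀ b ∈ l, 0 < b) :
    Ver r (Zword l) = if ∀ b ∈ l, r ∣ b then Zword (l.map (· / r)) else 0 := by
  rw [Zword, map_list_prod, List.map_map]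
  split_ifs with h
  · rw [Zword, List.map_map]
    exact congrArg List.prod <| List.map_congr_left fun b hb => by
      simp [ver_zgen (hl b hb), h b hb]
  · push Not at h
    obtain ⟨b, hb, hrb⟩ := h
    exact List.prod_eq_zero <| List.mem_map.mpr ⟨b, hb, by simp [ver_zgen (hl b hb), hrb]⟩

def newtonCoeff (l : List ℕ) : ℤ := (-1) ^ (l.length + 1) * (l.getLastD 0 : ℤ)

theorem newtonCoeff_map_mul_left (r : ℕ) (l : List ℕ) :
    newtonCoeff (l.map (r * ·)) = r * newtonCoeff l := by
  cases l using List.reverseRecOn <;> simp [newtonCoeff]; ring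

theorem newtonP_eq_sum (n : ℕ) :
    NewtonP n = ∑ c : Composition n, newtonCoeff c.blocks • Zword c.blocks := rfl

theorem ver_newtonP (r n : ℕ) :
    Ver r (NewtonP n) = ∑ c : Composition n,
      if ∀ b ∈ c.blocks, r ∣ b then newtonCoeff c.blocks • Zword (c.blocks.map (· / r)) else 0 := by
  rw [newtonP_eq_sum, map_sum]
  refine Fintype.sum_congr _ _ fun c => ?_
  rw [map_zsmul, ver_zword r fun _ => c.blocks_pos, smul_ite, smul_zero]

theorem ver_newtonP_of_not_dvd {r n : ℕ} (h : ¬ r ∣ n) : Ver r (NewtonP n) = 0 := by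
  rw [ver_newtonP]
  refine Finset.sum_eq_zero fun c _ => if_neg fun hc => h ?_
  rw [← c.blocks_sum]
  exact List.dvd_sum hc

theorem ver_newtonP_mul {r : ℕ} (hr : 0 < r) (m : ℕ) :
    Ver r (NewtonP (r * m)) = (r : ℤ) • NewtonP m := by
  rw [ver_newtonP, ← Finset.sum_filter, Finset.sum_subtype _ fun c => Finset.mem_filter_univ c,
    ← (Composition.scaleEquiv hr).sum_comp, newtonP_eq_sum, Finset.smul_sum]
  refine Fintype.sum_congr _ _ fun c => ?_
  simp only [Composition.scaleEquiv, Equiv.coe_fn_mk, Composition.scale_blocks_map_div]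
  rw [Composition.scale_blocks, newtonCoeff_map_mul_left, mul_smul]

theorem verschiebung_newton_general (r n : ℕ) (hr : 1 ≤ r) :
    Ver r (NewtonP n) = if r ∣ n then (r : ℤ) • NewtonP (n / r) else 0 := by
  split_ifs with h
  · obtain ⟨m, rfl⟩ := h
    rw [Nat.mul_div_cancel_left m hr, ver_newtonP_mul hr]
  · exact ver_newtonP_of_not_dvd h

/-- Behaviour of Newton primitives under Verschiebung. -/
theorem verschiebung_newton (r n : ℕ) (hr : 1 ≤ r) (hn : 1 ≤ n) :
    Ver r (NewtonP n) = if r ∣ n then (r : ℤ) • NewtonP (n / r) else 0 :=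
  verschiebung_newton_general r n hr
end
end
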